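/- Let A = KQ/I where Q is the quiver with vertices {1,2,3,4,5} and arrows α: 2→1, β: 3→2, γ: 3→1, δ: 5→3, ε: 4→3, and I = ⟨αβ⟩, and let θ ∈ Z^5 be a weight with θ(2) ≠ 0. Then for any θ-semi-stable dimension vector h of A, the module variety mod(A,h) has at most one θ-stable irreducible component. Moreover, for any two θ-stable dimension vectors h_1, h_2 with h_1(2) ≥ 1 and h_2(2) ≥ 1, the θ-stable loci mod(D_5, h_1)^{s}_θ and mod(D̃_4, h_2)^{s}_θ cannot both be non-empty, where D_5 is the subquiver of Q obtained by deleting the arrow β, and D̃_4 the subquiver obtained by deleting the arrow α. -/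

import Mathlib

/- ------------------------------------------------------------------
  Common framework: quivers, matrix representation varieties with the
  Zariski topology, the base-change group action, (semi-)stability,
  Schur modules, direct sums, moduli spaces as topological GIT
  quotients, semi-invariants, normality via coordinate rings, and the
  tame / Schur-tame / strictly wild conditions.
------------------------------------------------------------------ -/

namespace ModuliPaper

/-- A finite quiver: vertices `V`, arrows `Ar`, tail `s` and head `t`. -/
structure Quiv where
  V : Type
  Ar : Type
  [fintV : Fintype V]
  [decV : DecidableEq V]
  [fintA : Fintype Ar]
  [decA : DecidableEq Ar]
  s : Ar → V
  t : Ar → V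

attribute [instance] Quiv.fintV Quiv.decV Quiv.fintA Quiv.decA

variable (K : Type) [Field K]

/-- Affine space over `K`, carrying the Zariski topology (below). -/
def AffSp (ι : Type) : Type := ι → K

/-- The Zariski topology on affine space: the basic open sets are the
complements of hypersurfaces. -/
noncomputable instance AffSp.topologicalSpace (ι : Type) : TopologicalSpace (AffSp K ι) :=
  TopologicalSpace.generateFrom
    {U | ∃ p : MvPolynomial ι K, U = {x : AffSp K ι | MvPolynomial.eval x p ≠ 0}}

/-- A point of the representation space of the quiver `Q` with dimension
vector `d`: a matrix for every arrow. -/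
structure Rep (Q : Quiv) (d : Q.V → ℕ) where
  mat : ∀ a : Q.Ar, Matrix (Fin (d (Q.t a))) (Fin (d (Q.s a))) K

/-- The coordinates of the representation space. -/
def CoordIdx (Q : Quiv) (d : Q.V → ℕ) : Type :=
  Σ a : Q.Ar, Fin (d (Q.t a)) × Fin (d (Q.s a))

def Rep.coords {Q : Quiv} {d : Q.V → ℕ} (M : Rep K Q d) : AffSp K (CoordIdx Q d) :=
  fun c => M.mat c.1 c.2.1 c.2.2

/-- The Zariski topology on the representation space. -/
noncomputable instance Rep.topologicalSpace (Q : Quiv) (d : Q.V → ℕ) :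
    TopologicalSpace (Rep K Q d) :=
  TopologicalSpace.induced (Rep.coords K) inferInstance

/-- The base change group `GL(d) = ∏ₓ GL(d(x),K)` (as a family of invertible
matrices) acting by simultaneous conjugation. -/
def glAct {Q : Quiv} {d : Q.V → ℕ}
    (g : ∀ x : Q.V, Matrix.GeneralLinearGroup (Fin (d x)) K) (M : Rep K Q d) :
    Rep K Q d :=
  ⟨fun a => (g (Q.t a) : Matrix (Fin (d (Q.t a))) (Fin (d (Q.t a))) K) * M.mat a *
    (((g (Q.s a))⁻¹ : Matrix.GeneralLinearGroup (Fin (d (Q.s a))) K) :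
      Matrix (Fin (d (Q.s a))) (Fin (d (Q.s a))) K)⟩

/-- Two points are isomorphic as modules iff they lie in the same `GL(d)`-orbit. -/
def Iso {Q : Quiv} {d : Q.V → ℕ} (M N : Rep K Q d) : Prop :=
  ∃ g, glAct K g M = N

/-- The `GL(d)`-orbit of a point of the representation space. -/
def glOrbit {Q : Quiv} {d : Q.V → ℕ} (M : Rep K Q d) : Set (Rep K Q d) :=
  {N | Iso K M N}

def IsGLInvariant {Q : Quiv} {d : Q.V → ℕ} (C : Set (Rep K Q d)) : Prop :=
  ∀ g M, M ∈ C → glAct K g M ∈ C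

/-- `C` is the closure of a single `GL(d)`-orbit. -/
def IsOrbitClosure {Q : Quiv} {d : Q.V → ℕ} (C : Set (Rep K Q d)) : Prop :=
  ∃ M : Rep K Q d, C = closure (glOrbit K M)

/-- Paths in a quiver, via Mathlib's `Quiver.Path`. -/
instance quivQuiver (Q : Quiv) : Quiver Q.V :=
  ⟨fun x y => {a : Q.Ar // Q.s a = x ∧ Q.t a = y}⟩

/-- The linear map attached to an arrow by a representation. -/
def arrowEval {Q : Quiv} {d : Q.V → ℕ} (M : Rep K Q d) {x y : Q.V} (e : x ⟶ y) :
    (Fin (d x) → K) →ₗ[K] (Fin (d y) → K) := by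
  obtain ⟨a, rfl, rfl⟩ := e
  exact (M.mat a).mulVecLin

/-- The linear map attached to a path by a representation. -/
def pathEval {Q : Quiv} {d : Q.V → ℕ} (M : Rep K Q d) :
    {x y : Q.V} → Quiver.Path x y → ((Fin (d x) → K) →ₗ[K] (Fin (d y) → K))
  | _, _, Quiver.Path.nil => LinearMap.id
  | _, _, Quiver.Path.cons p e => (arrowEval K M e).comp (pathEval M p)

/-- The evaluation of a K-linear combination of parallel paths (an element of the
path algebra) on a representation. -/
noncomputable def relEval {Q : Quiv} {d : Q.V → ℕ} (M : Rep K Q d) {x y : Q.V}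
    (r : Quiver.Path x y →₀ K) : (Fin (d x) → K) →ₗ[K] (Fin (d y) → K) :=
  r.sum fun p c => c • pathEval K M p

/-- A set of relations for a quiver: admissible elements of the path algebra. -/
structure RelSet (Q : Quiv) where
  rels : Set (Σ x y : Q.V, (Quiver.Path x y →₀ K))

/-- The module variety `mod(A,d)` of the bound quiver algebra `A = KQ/I`,
`I = ⟨rels⟩`: the locus where all relations vanish. -/
noncomputable def modVar {Q : Quiv} (R : RelSet K Q) (d : Q.V → ℕ) : Set (Rep K Q d) :=
  {M | ∀ r ∈ R.rels, relEval K M r.2.2 = 0}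

/-- `Q` has no oriented cycles. -/
def Quiv.IsAcyclic (Q : Quiv) : Prop :=
  ∀ (x : Q.V) (p : Quiver.Path x x), p = Quiver.Path.nil

/-- Admissibility of the ideal of relations, encoded semantically:
every relation lies in (the span of paths of) length `≥ 2`, and some power of the
arrow ideal is contained in the ideal of relations (i.e. sufficiently long paths
act by `0` on every module of the algebra). -/
noncomputable def RelSet.IsAdmissible {Q : Quiv} (R : RelSet K Q) : Prop :=
  (∀ r ∈ R.rels, ∀ p ∈ (r.2.2).support, 2 ≤ p.length) ∧
  ∃ L : ℕ, ∀ (d : Q.V → ℕ), ∀ M ∈ modVar K R d, ∀ (x y : Q.V) (p : Quiver.Path x y),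
    L ≤ p.length → pathEval K M p = 0

/-- A subrepresentation (= submodule) of a representation. -/
structure SubRep {Q : Quiv} {d : Q.V → ℕ} (M : Rep K Q d) where
  space : ∀ x : Q.V, Submodule K (Fin (d x) → K)
  stable : ∀ a : Q.Ar, ∀ v ∈ space (Q.s a), (M.mat a).mulVec v ∈ space (Q.t a)

/-- The dimension vector of a subrepresentation. -/
noncomputable def SubRep.dimVec {Q : Quiv} {d : Q.V → ℕ} {M : Rep K Q d}
    (W : SubRep K M) : Q.V → ℕ :=
  fun x => Module.finrank K (W.space x)

/-- The pairing `θ(e) = ∑ₓ θ(x) e(x)` of a weight with a dimension vector. -/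
def wt {Q : Quiv} (θ : Q.V → ℤ) (e : Q.V → ℕ) : ℤ := ∑ x : Q.V, θ x * (e x : ℤ)

/-- King's θ-semi-stability. -/
def IsSemiStable {Q : Quiv} {d : Q.V → ℕ} (θ : Q.V → ℤ) (M : Rep K Q d) : Prop :=
  wt θ d = 0 ∧ ∀ W : SubRep K M, wt θ (W.dimVec K) ≤ 0

/-- King's θ-stability. -/
def IsStable {Q : Quiv} {d : Q.V → ℕ} (θ : Q.V → ℤ) (M : Rep K Q d) : Prop :=
  d ≠ 0 ∧ wt θ d = 0 ∧
    ∀ W : SubRep K M, W.dimVec K ≠ 0 → W.dimVec K ≠ d → wt θ (W.dimVec K) < 0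

/-- Morphisms of representations. -/
def IsHom {Q : Quiv} {d d' : Q.V → ℕ} (M : Rep K Q d) (N : Rep K Q d')
    (φ : ∀ x : Q.V, Matrix (Fin (d' x)) (Fin (d x)) K) : Prop :=
  ∀ a : Q.Ar, φ (Q.t a) * M.mat a = N.mat a * φ (Q.s a)

/-- Endomorphisms of a representation. -/
def IsEndo {Q : Quiv} {d : Q.V → ℕ} (M : Rep K Q d)
    (φ : ∀ x : Q.V, Matrix (Fin (d x)) (Fin (d x)) K) : Prop :=
  IsHom K M M φ

/-- A Schur module: all endomorphisms are scalar, i.e. `End_A(M) ≅ K`. -/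
def IsSchur {Q : Quiv} {d : Q.V → ℕ} (M : Rep K Q d) : Prop :=
  ∀ φ, IsEndo K M φ → ∃ c : K, ∀ x : Q.V, φ x = c • (1 : Matrix (Fin (d x)) (Fin (d x)) K)

/-- The direct sum of two representations. -/
def dsum {Q : Quiv} {d₁ d₂ : Q.V → ℕ} (M : Rep K Q d₁) (N : Rep K Q d₂) :
    Rep K Q (d₁ + d₂) :=
  ⟨fun a => Matrix.reindex finSumFinEquiv finSumFinEquiv
    (Matrix.fromBlocks (M.mat a) 0 0 (N.mat a))⟩

/-- Transport of a representation along an equality of dimension vectors. -/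
def recast {Q : Quiv} {d d' : Q.V → ℕ} (h : d = d') (M : Rep K Q d) : Rep K Q d' :=
  h ▸ M

/-- The dimension vector of a list of representations. -/
def sumDim {Q : Quiv} : List (Σ e : Q.V → ℕ, Rep K Q e) → (Q.V → ℕ)
  | [] => 0
  | x :: L => x.1 + sumDim L

/-- The direct sum of a list of representations. -/
def listSum {Q : Quiv} : (L : List (Σ e : Q.V → ℕ, Rep K Q e)) → Rep K Q (sumDim K L)
  | [] => ⟨fun _ => 0⟩
  | x :: L => dsum K x.2 (listSum L)

/-- `M` is isomorphic to the direct sum of the members of the list `L`. -/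
def IsDirectSumOf {Q : Quiv} {d : Q.V → ℕ} (M : Rep K Q d)
    (L : List (Σ e : Q.V → ℕ, Rep K Q e)) : Prop :=
  ∃ h : sumDim K L = d, Iso K (recast K h (listSum K L)) M

/-- Indecomposability of a representation. -/
def Indec {Q : Quiv} {d : Q.V → ℕ} (M : Rep K Q d) : Prop :=
  d ≠ 0 ∧ ∀ (d₁ d₂ : Q.V → ℕ) (M₁ : Rep K Q d₁) (M₂ : Rep K Q d₂) (h : d₁ + d₂ = d),
    d₁ ≠ 0 → d₂ ≠ 0 → ¬ Iso K (recast K h (dsum K M₁ M₂)) M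

/-- An irreducible component of a (closed) subvariety `Z` of the representation
space: a maximal irreducible closed subset of `Z`. -/
def IsIrrComp {Q : Quiv} {d : Q.V → ℕ} (Z C : Set (Rep K Q d)) : Prop :=
  C ⊆ Z ∧ IsClosed C ∧ IsIrreducible C ∧
    ∀ D : Set (Rep K Q d), D ⊆ Z → IsClosed D → IsIrreducible D → C ⊆ D → C = D

/-- The θ-semi-stable locus of `C`. -/
def ssLocus {Q : Quiv} {d : Q.V → ℕ} (C : Set (Rep K Q d)) (θ : Q.V → ℤ) :
    Set (Rep K Q d) :=
  {M | M ∈ C ∧ IsSemiStable K θ M}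

/-- S-equivalence on the semistable locus: orbit closures meet inside the
semistable locus.  The GIT quotient identifies exactly S-equivalent points. -/
def SEquiv {Q : Quiv} {d : Q.V → ℕ} (C : Set (Rep K Q d)) (θ : Q.V → ℤ)
    (M N : ↥(ssLocus K C θ)) : Prop :=
  (closure (glOrbit K M.1) ∩ closure (glOrbit K N.1) ∩ ssLocus K C θ).Nonempty

/-- The moduli space `M(C)^{ss}_θ` of θ-semi-stable modules in `C`, realized
(as a topological space) as the quotient of the semistable locus of `C` by
S-equivalence; its points are the θ-polystable modules in `C`. -/
def ModuliSpace {Q : Quiv} {d : Q.V → ℕ} (C : Set (Rep K Q d)) (θ : Q.V → ℤ) : Type :=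
  Quot (SEquiv K C θ)

noncomputable instance {Q : Quiv} {d : Q.V → ℕ} (C : Set (Rep K Q d)) (θ : Q.V → ℤ) :
    TopologicalSpace (ModuliSpace K C θ) :=
  instTopologicalSpaceQuot

/-- The image of `C^{ss}_θ` in the moduli space of the ambient variety `Z`:
this is `M(C)^{ss}_θ` as a (closed) subvariety of `M(Z)^{ss}_θ`. -/
def moduliImage {Q : Quiv} {d : Q.V → ℕ} (Z C : Set (Rep K Q d)) (θ : Q.V → ℤ) :
    Set (ModuliSpace K Z θ) :=
  Quot.mk _ '' {M : ↥(ssLocus K Z θ) | M.1 ∈ C}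

/-- The `m`-th symmetric power of a topological space. -/
def SymPow (m : ℕ) (X : Type*) [TopologicalSpace X] : Type _ :=
  Quot (fun f g : Fin m → X => ∃ σ : Equiv.Perm (Fin m), f = g ∘ σ)

noncomputable instance (m : ℕ) (X : Type*) [TopologicalSpace X] :
    TopologicalSpace (SymPow m X) :=
  instTopologicalSpaceQuot

/-- Projective `m`-space over `K` with its Zariski topology (quotient of the
punctured affine cone). -/
def ProjSpace (m : ℕ) : Type :=
  Quot (fun v w : {x : AffSp K (Fin (m + 1)) // ∃ i, x i ≠ 0} =>
    ∃ c : K, c ≠ 0 ∧ ∀ i, w.1 i = c * v.1 i)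

noncomputable instance (m : ℕ) : TopologicalSpace (ProjSpace K m) :=
  instTopologicalSpaceQuot

/-- A product of projective spaces `ℙ^{m 0} × ⋯ × ℙ^{m (n-1)}` over `K`, with its
Zariski topology (quotient of a product of punctured affine cones, carrying the
Zariski topology of the total affine space). -/
def ProdProj (n : ℕ) (m : Fin n → ℕ) : Type :=
  Quot (fun v w : {x : AffSp K (Σ i : Fin n, Fin (m i + 1)) // ∀ i, ∃ j, x ⟨i, j⟩ ≠ 0} =>
    ∃ c : Fin n → K, (∀ i, c i ≠ 0) ∧ ∀ i j, w.1 ⟨i, j⟩ = c i * v.1 ⟨i, j⟩)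

noncomputable instance (n : ℕ) (m : Fin n → ℕ) : TopologicalSpace (ProdProj K n m) :=
  instTopologicalSpaceQuot

end ModuliPaper
namespace ModuliPaper

variable (K : Type) [Field K]

/- --------------------- semi-invariants --------------------- -/

/-- The value of the character `χ_θ` of `GL(d)` at `g`:
`χ_θ(g) = ∏ₓ det(g(x))^{θ(x)}`. -/
noncomputable def chiWt {Q : Quiv} {d : Q.V → ℕ} (θ : Q.V → ℤ)
    (g : ∀ x : Q.V, Matrix.GeneralLinearGroup (Fin (d x)) K) : K :=
  ∏ x : Q.V, ((g x : Matrix (Fin (d x)) (Fin (d x)) K).det) ^ (θ x)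

/-- A semi-invariant of weight `χ_θ` on `C`: a regular (polynomial) function on
`C` satisfying `f(g·M) = χ_θ(g)·f(M)`. -/
def IsSemiInvariant {Q : Quiv} {d : Q.V → ℕ} (C : Set (Rep K Q d)) (θ : Q.V → ℤ)
    (f : ↥C → K) : Prop :=
  (∃ p : MvPolynomial (CoordIdx Q d) K,
      ∀ M : ↥C, f M = MvPolynomial.eval (Rep.coords K M.1) p) ∧
  ∀ (g) (M : ↥C) (h : glAct K g M.1 ∈ C), f ⟨glAct K g M.1, h⟩ = chiWt K θ g * f M

/-- The space `SI(C)_θ` of semi-invariants of weight `χ_θ` on `C`. -/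
noncomputable def SIModule {Q : Quiv} {d : Q.V → ℕ} (C : Set (Rep K Q d))
    (θ : Q.V → ℤ) : Submodule K (↥C → K) where
  carrier := {f | IsSemiInvariant K C θ f}
  add_mem' := by
    rintro f₁ f₂ ⟨⟨p₁, hp₁⟩, hw₁⟩ ⟨⟨p₂, hp₂⟩, hw₂⟩
    refine ⟨⟨p₁ + p₂, fun M => ?_⟩, fun g M h => ?_⟩
    · simp [hp₁ M, hp₂ M]
    · have := hw₁ g M h; have := hw₂ g M h
      simp only [Pi.add_apply, *]; ring
  zero_mem' := ⟨⟨0, fun M => by simp⟩, fun g M h => by simp⟩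
  smul_mem' := by
    rintro c f ⟨⟨p, hp⟩, hw⟩
    refine ⟨⟨c • p, fun M => ?_⟩, fun g M h => ?_⟩
    · simp [hp M, MvPolynomial.smul_eval]; exact (MvPolynomial.smul_eval _ p c).symm
    · have := hw g M h
      simp only [Pi.smul_apply, smul_eq_mul, *]; ring

/- --------------------- coordinate rings and normality --------------------- -/

/-- The vanishing ideal of a subset of the representation space. -/
noncomputable def vanishingIdeal {Q : Quiv} {d : Q.V → ℕ} (C : Set (Rep K Q d)) :
    Ideal (MvPolynomial (CoordIdx Q d) K) where
  carrier := {p | ∀ M ∈ C, MvPolynomial.eval (Rep.coords K M) p = 0}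
  add_mem' := by intro p q hp hq M hM; simp [hp M hM, hq M hM]
  zero_mem' := by intro M hM; simp
  smul_mem' := by intro c p hp M hM; simp [smul_eq_mul, hp M hM]

/-- The coordinate ring `K[C]` of a subvariety of the representation space. -/
noncomputable def coordRing {Q : Quiv} {d : Q.V → ℕ} (C : Set (Rep K Q d)) : Type :=
  MvPolynomial (CoordIdx Q d) K ⧸ vanishingIdeal K C

noncomputable instance {Q : Quiv} {d : Q.V → ℕ} (C : Set (Rep K Q d)) :
    CommRing (coordRing K C) :=
  Ideal.Quotient.commRing _

/-- Normality of a variety: its coordinate ring is an integrally closed domain. -/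
def IsNormalVar {Q : Quiv} {d : Q.V → ℕ} (C : Set (Rep K Q d)) : Prop :=
  IsDomain (coordRing K C) ∧ IsIntegrallyClosed (coordRing K C)

/- --------------------- gentle and string algebras --------------------- -/

/-- "at most one element" of a set. -/
def AtMostOne {α : Type*} (s : Set α) : Prop := ∀ a ∈ s, ∀ b ∈ s, a = b

/-- "at most two elements" of a set. -/
def AtMostTwo {α : Type*} (s : Set α) : Prop :=
  ∀ a ∈ s, ∀ b ∈ s, ∀ c ∈ s, a = b ∨ a = c ∨ b = c

/-- A set of monomial (length-two) relations: pairs `(a,b)` of composable arrows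
(`a` followed by `b`), generating the ideal `I = ⟨{ba : (a,b) ∈ R}⟩`. -/
structure PairRels (Q : Quiv) where
  R : Set (Q.Ar × Q.Ar)
  comp : ∀ p ∈ R, Q.t p.1 = Q.s p.2

/-- The module variety of the algebra `KQ/⟨R⟩` with length-two monomial
relations `R`: the locus where all composites `M(b)M(a)`, `(a,b) ∈ R`, vanish. -/
def pairModVar {Q : Quiv} (P : PairRels Q) (d : Q.V → ℕ) : Set (Rep K Q d) :=
  {M | ∀ a b, (hab : (a, b) ∈ P.R) →
    ∀ (i : Fin (d (Q.t b))) (j : Fin (d (Q.s a))),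
      ∑ k : Fin (d (Q.t a)),
        M.mat b i (finCongr (congrArg d (P.comp (a, b) hab)) k) * M.mat a k j = 0}

/-- The gentle conditions on a bound quiver `(Q, I)` with `I` generated by the
length-two paths in `R`. -/
def PairRels.IsGentle {Q : Quiv} (P : PairRels Q) : Prop :=
  (∀ x : Q.V, AtMostTwo {a | Q.s a = x} ∧ AtMostTwo {a | Q.t a = x}) ∧
  (∀ a : Q.Ar, AtMostOne {b | Q.t a = Q.s b ∧ (a, b) ∉ P.R} ∧
               AtMostOne {b | Q.t b = Q.s a ∧ (b, a) ∉ P.R}) ∧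
  (∀ a : Q.Ar, AtMostOne {b | (a, b) ∈ P.R} ∧ AtMostOne {b | (b, a) ∈ P.R})

/-- The length-two path `a`-then-`b` in `Q`. -/
def path2 {Q : Quiv} (a b : Q.Ar) (h : Q.t a = Q.s b) : Quiver.Path (Q.s a) (Q.t b) :=
  (Quiver.Path.nil.cons (⟨a, rfl, rfl⟩ : (Q.s a : Q.V) ⟶ Q.t a)).cons
    (⟨b, h.symm, rfl⟩ : (Q.t a : Q.V) ⟶ Q.t b)

/-- A set of monomial relations (paths of length `≥ 2`). -/
structure MonRels (Q : Quiv) where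
  R : Set (Σ x y : Q.V, Quiver.Path x y)
  len2 : ∀ r ∈ R, 2 ≤ r.2.2.length

/-- The module variety of the monomial algebra `KQ/⟨R⟩`. -/
def monModVar {Q : Quiv} (R : MonRels Q) (d : Q.V → ℕ) : Set (Rep K Q d) :=
  {M | ∀ r ∈ R.R, pathEval K M r.2.2 = 0}

/-- The length-two path `a`-then-`b` lies in the monomial ideal `⟨R⟩`. -/
def MonRels.pairIn {Q : Quiv} (R : MonRels Q) (a b : Q.Ar) : Prop :=
  ∃ h : Q.t a = Q.s b, (⟨Q.s a, Q.t b, path2 a b h⟩ : Σ x y : Q.V, Quiver.Path x y) ∈ R.R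

/-- The string algebra conditions on a monomial bound quiver `(Q, ⟨R⟩)`. -/
def MonRels.IsString {Q : Quiv} (R : MonRels Q) : Prop :=
  (∀ x : Q.V, AtMostTwo {a | Q.s a = x} ∧ AtMostTwo {a | Q.t a = x}) ∧
  (∀ a : Q.Ar, AtMostOne {b | Q.t a = Q.s b ∧ ¬ R.pairIn a b} ∧
               AtMostOne {b | Q.t b = Q.s a ∧ ¬ R.pairIn b a})

/-- A coloring of a quiver: a map on arrows whose fibres are directed paths. -/
structure Coloring (Q : Quiv) (S : Type) where
  c : Q.Ar → S
  isPath : ∀ s : S, ∃ L : List Q.Ar, L.Nodup ∧ (∀ a, a ∈ L ↔ c a = s) ∧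
    L.Chain' (fun a b => Q.t a = Q.s b)

/-- The set of length-two relations `I_c` induced by a coloring: all composable
pairs of arrows of the same color. -/
def colorRels {Q : Quiv} {S : Type} (col : Coloring Q S) : PairRels Q where
  R := {p | Q.t p.1 = Q.s p.2 ∧ col.c p.1 = col.c p.2}
  comp := fun _ hp => hp.1

/- --------------------- band modules (string algebras) --------------------- -/

/-- Over an acyclic string algebra, the indecomposable modules are string and
band modules (Butler–Ringel), and the band modules are exactly the
indecomposables `M` with `dim M = ∑ₐ rank M(a)`. -/
def IsBand {Q : Quiv} {d : Q.V → ℕ} (M : Rep K Q d) : Prop :=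
  Indec K M ∧ (∑ x : Q.V, d x) = ∑ a : Q.Ar, (M.mat a).rank

/-- `M` is (isomorphic to) a direct sum of band modules. -/
def IsSumOfBands {Q : Quiv} {d : Q.V → ℕ} (M : Rep K Q d) : Prop :=
  ∃ L : List (Σ e : Q.V → ℕ, Rep K Q e), (∀ p ∈ L, IsBand K p.2) ∧ IsDirectSumOf K M L

/-- A regular irreducible component: the generic module of `C` is a direct sum
of band modules. -/
def IsGenericallyBands {Q : Quiv} {d : Q.V → ℕ} (C : Set (Rep K Q d)) : Prop :=
  ∃ U : Set (Rep K Q d), IsOpen U ∧ (U ∩ C).Nonempty ∧ ∀ M ∈ U ∩ C, IsSumOfBands K M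

end ModuliPaper
namespace ModuliPaper

variable (K : Type) [Field K]

/- --------------------- tame and Schur-tame --------------------- -/

/-- A one-parameter algebraic family of `d`-dimensional representations defined
over a localization `K[t]_f` of `K[t]`: a free `K[t]_f`-module structure is
encoded by matrices of polynomials divided by a power of `f`. -/
structure ParamFamily (Q : Quiv) (d : Q.V → ℕ) where
  f : Polynomial K
  hf : f ≠ 0
  k : ℕ
  num : ∀ a : Q.Ar, Matrix (Fin (d (Q.t a))) (Fin (d (Q.s a))) (Polynomial K)

/-- The member of the family at the parameter `lam` (i.e. `T ⊗_{K[t]_f} K[t]/(t-lam)`). -/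
noncomputable def ParamFamily.evalAt {Q : Quiv} {d : Q.V → ℕ} (F : ParamFamily K Q d)
    (lam : K) : Rep K Q d :=
  ⟨fun a => Matrix.of fun i j =>
    Polynomial.eval lam (F.num a i j) / (Polynomial.eval lam F.f) ^ F.k⟩

/-- The algebra with module varieties `MV` is Schur-tame: for every dimension
vector `d` there are finitely many one-parameter families of `d`-dimensional
modules, each consisting of pairwise non-isomorphic Schur modules (a
Schur-embedding `T_i ⊗_{R_i} -`), such that every `d`-dimensional Schur module
— up to finitely many isomorphism classes — belongs to one of the families. -/
noncomputable def IsSchurTame {Q : Quiv} (MV : ∀ d : Q.V → ℕ, Set (Rep K Q d)) : Prop :=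
  ∀ d : Q.V → ℕ, ∃ (n : ℕ) (F : Fin n → ParamFamily K Q d),
    (∀ i lam, Polynomial.eval lam (F i).f ≠ 0 →
      (F i).evalAt K lam ∈ MV d ∧ IsSchur K ((F i).evalAt K lam)) ∧
    (∀ i lam₁ lam₂, Polynomial.eval lam₁ (F i).f ≠ 0 → Polynomial.eval lam₂ (F i).f ≠ 0 →
      Iso K ((F i).evalAt K lam₁) ((F i).evalAt K lam₂) → lam₁ = lam₂) ∧
    ∃ Exc : Set (Rep K Q d), Exc.Finite ∧
      ∀ M ∈ MV d, IsSchur K M →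
        (∃ i lam, Polynomial.eval lam (F i).f ≠ 0 ∧ Iso K M ((F i).evalAt K lam)) ∨
        (∃ E ∈ Exc, Iso K M E)

/-- The algebra with module varieties `MV` is tame: for every dimension vector
`d` there are finitely many one-parameter families of `d`-dimensional modules,
each consisting of pairwise non-isomorphic indecomposable modules (a
representation embedding `T_i ⊗_{R_i} -`), such that every `d`-dimensional
indecomposable module — up to finitely many isomorphism classes — belongs to
one of the families. -/
noncomputable def IsTame {Q : Quiv} (MV : ∀ d : Q.V → ℕ, Set (Rep K Q d)) : Prop :=
  ∀ d : Q.V → ℕ, ∃ (n : ℕ) (F : Fin n → ParamFamily K Q d),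
    (∀ i lam, Polynomial.eval lam (F i).f ≠ 0 →
      (F i).evalAt K lam ∈ MV d ∧ Indec K ((F i).evalAt K lam)) ∧
    (∀ i lam₁ lam₂, Polynomial.eval lam₁ (F i).f ≠ 0 → Polynomial.eval lam₂ (F i).f ≠ 0 →
      Iso K ((F i).evalAt K lam₁) ((F i).evalAt K lam₂) → lam₁ = lam₂) ∧
    ∃ Exc : Set (Rep K Q d), Exc.Finite ∧
      ∀ M ∈ MV d, Indec K M →
        (∃ i lam, Polynomial.eval lam (F i).f ≠ 0 ∧ Iso K M ((F i).evalAt K lam)) ∨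
        (∃ E ∈ Exc, Iso K M E)

/- --------------------- strictly wild algebras --------------------- -/

/-- The representation of `Q` of dimension vector `m • e` obtained from a
template `T` of matrices over the free algebra `K⟨x,y⟩` (encoding an
`A`-`K⟨x,y⟩`-bimodule free of finite rank over `K⟨x,y⟩`) by specializing
`(x,y)` to the pair of `m × m` matrices `(X,Y)`. -/
noncomputable def blockRep {Q : Quiv} (e : Q.V → ℕ) (m : ℕ)
    (T : ∀ a : Q.Ar, Matrix (Fin (e (Q.t a))) (Fin (e (Q.s a))) (FreeAlgebra K (Fin 2)))
    (X Y : Matrix (Fin m) (Fin m) K) : Rep K Q (fun x => e x * m) :=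
  ⟨fun a => Matrix.of fun i j =>
    (FreeAlgebra.lift K ![X, Y] (T a (finProdFinEquiv.symm i).1 (finProdFinEquiv.symm j).1))
      (finProdFinEquiv.symm i).2 (finProdFinEquiv.symm j).2⟩

/-- The block-diagonal family of matrices induced by an `m' × m` matrix `ψ`:
the image of a morphism of `K⟨x,y⟩`-modules under the functor `T ⊗ -`. -/
def blockify {Q : Quiv} (e : Q.V → ℕ) {m m' : ℕ} (ψ : Matrix (Fin m') (Fin m) K) :
    ∀ x : Q.V, Matrix (Fin (e x * m')) (Fin (e x * m)) K :=
  fun _ => Matrix.of fun i j =>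
    if (finProdFinEquiv.symm i).1 = (finProdFinEquiv.symm j).1 then
      ψ (finProdFinEquiv.symm i).2 (finProdFinEquiv.symm j).2
    else 0

/-- Strict wildness of the algebra with module varieties `MV`: there is an exact
`K`-linear functor `mod K⟨x,y⟩ → mod A`, given by tensoring with a bimodule
free of finite rank over `K⟨x,y⟩` (encoded by a template `T`), which is fully
faithful. -/
noncomputable def IsStrictlyWild {Q : Quiv} (MV : ∀ d : Q.V → ℕ, Set (Rep K Q d)) : Prop :=
  ∃ (e : Q.V → ℕ)
    (T : ∀ a : Q.Ar, Matrix (Fin (e (Q.t a))) (Fin (e (Q.s a))) (FreeAlgebra K (Fin 2))),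
    (∀ (m : ℕ) (X Y : Matrix (Fin m) (Fin m) K),
      blockRep K e m T X Y ∈ MV (fun x => e x * m)) ∧
    (∀ (m m' : ℕ) (X Y : Matrix (Fin m) (Fin m) K) (X' Y' : Matrix (Fin m') (Fin m') K),
      -- functoriality: morphisms of `K⟨x,y⟩`-modules map to morphisms
      (∀ ψ : Matrix (Fin m') (Fin m) K, ψ * X = X' * ψ → ψ * Y = Y' * ψ →
        IsHom K (blockRep K e m T X Y) (blockRep K e m' T X' Y') (blockify K e ψ)) ∧
      -- faithfulness
      (∀ ψ₁ ψ₂ : Matrix (Fin m') (Fin m) K, blockify (Q := Q) K e ψ₁ = blockify K e ψ₂ → ψ₁ = ψ₂) ∧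
      -- fullness
      (∀ φ, IsHom K (blockRep K e m T X Y) (blockRep K e m' T X' Y') φ →
        ∃ ψ : Matrix (Fin m') (Fin m) K, ψ * X = X' * ψ ∧ ψ * Y = Y' * ψ ∧ φ = blockify K e ψ))

/- --------------------- θ-stable decompositions --------------------- -/

/-- The list of representations `N i j`, `j < m i`, over the indices `i` with
`i < l`. -/
def famList {Q : Quiv} {nn : ℕ} (dd : Fin nn → Q.V → ℕ) (m : Fin nn → ℕ) (l : ℕ)
    (N : ∀ i : Fin nn, Fin (m i) → Rep K Q (dd i)) : List (Σ e : Q.V → ℕ, Rep K Q e) :=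
  ((List.finRange nn).filter (fun i : Fin nn => decide ((i : ℕ) < l))).flatMap
    (fun i : Fin nn => (List.finRange (m i)).map (fun j => ⟨dd i, N i j⟩))

/-- A θ-stable decomposition `C = m₀·C₀ ∔ m₁·C₁ ∔ ⋯`: for the generic module
`M ∈ C^{ss}_θ`, the associated θ-polystable module `gr_θ(M)` (the unique
polystable module in the closure of the orbit of `M` within the semistable
locus) is a direct sum of θ-stable modules, `m i` of which belong to `Cs i`. -/
def ThetaStableDecomp {Q : Quiv} {d : Q.V → ℕ} (C : Set (Rep K Q d)) (θ : Q.V → ℤ)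
    {nn : ℕ} (dd : Fin nn → Q.V → ℕ) (m : Fin nn → ℕ)
    (Cs : ∀ i, Set (Rep K Q (dd i))) : Prop :=
  ∃ U : Set (Rep K Q d), IsOpen U ∧ (U ∩ C).Nonempty ∧
    ∀ M ∈ U ∩ C, IsSemiStable K θ M ∧
      ∃ N : ∀ i, Fin (m i) → Rep K Q (dd i),
        (∀ i j, N i j ∈ Cs i ∧ IsStable K θ (N i j)) ∧
        ∃ P ∈ closure (glOrbit K M), IsSemiStable K θ P ∧
          IsDirectSumOf K P (famList K dd m nn N)

/-- The dimension vector `∑_{i < l} m i • dd i`. -/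
def belowDim {Q : Quiv} {nn : ℕ} (dd : Fin nn → Q.V → ℕ) (m : Fin nn → ℕ) (l : ℕ) :
    Q.V → ℕ :=
  fun x => ∑ i ∈ Finset.univ.filter (fun i : Fin nn => (i : ℕ) < l), m i * dd i x

/-- The direct sum locus `C₀^{⊕ m₀} ⊕ ⋯ ⊕ C_{l-1}^{⊕ m_{l-1}}`. -/
def sumLocusBelow {Q : Quiv} {nn : ℕ} (dd : Fin nn → Q.V → ℕ) (m : Fin nn → ℕ) (l : ℕ)
    (Cs : ∀ i, Set (Rep K Q (dd i))) : Set (Rep K Q (belowDim dd m l)) :=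
  {M | ∃ N : ∀ i, Fin (m i) → Rep K Q (dd i),
    (∀ (i : Fin nn) (j : Fin (m i)), (i : ℕ) < l → N i j ∈ Cs i) ∧ IsDirectSumOf K M (famList K dd m l N)}

/- --------------------- extensions --------------------- -/

/-- The extension of `N` by `M` (`0 → M → Z → N → 0`) determined by the blocks
`E`: `Z(a) = [[M(a), E(a)], [0, N(a)]]`. -/
def triSum {Q : Quiv} {d₁ d₂ : Q.V → ℕ} (M : Rep K Q d₁) (N : Rep K Q d₂)
    (E : ∀ a : Q.Ar, Matrix (Fin (d₁ (Q.t a))) (Fin (d₂ (Q.s a))) K) :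
    Rep K Q (d₁ + d₂) :=
  ⟨fun a => Matrix.reindex finSumFinEquiv finSumFinEquiv
    (Matrix.fromBlocks (M.mat a) (E a) 0 (N.mat a))⟩

/-- `ext¹_A(D, E) = 0`: the minimal dimension of `Ext¹_A(X,Y)` over
`(X,Y) ∈ D × E` vanishes, i.e. there is a pair `(X,Y) ∈ D × E` all of whose
extensions (inside the module variety `MV`) split. -/
def Ext1Vanishes {Q : Quiv} (MV : ∀ e : Q.V → ℕ, Set (Rep K Q e)) {dX dY : Q.V → ℕ}
    (D : Set (Rep K Q dX)) (E : Set (Rep K Q dY)) : Prop :=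
  ∃ X ∈ D, ∃ Y ∈ E, ∀ B, triSum K Y X B ∈ MV (dY + dX) →
    Iso K (triSum K Y X B) (dsum K Y X)

end ModuliPaper
namespace ModuliPaper

/-- The quiver of Theorem 2: vertices `1,…,5` (as `0,…,4 : Fin 5`), arrows
`α : 2→1`, `β : 3→2`, `γ : 3→1`, `δ : 5→3`, `ε : 4→3`
(as `0,…,4 : Fin 5`, with tails `![1,2,2,4,3]` and heads `![0,1,0,2,2]`). -/
abbrev Q5 : Quiv where
  V := Fin 5
  Ar := Fin 5
  s := ![1, 2, 2, 4, 3]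
  t := ![0, 1, 0, 2, 2]

/-- The relation `I = ⟨αβ⟩`: the composition `β` (arrow `1`) followed by `α`
(arrow `0`). -/
def R5 : PairRels Q5 where
  R := {p : Fin 5 × Fin 5 | p = (1, 0)}
  comp := by rintro p hp; rw [Set.mem_setOf_eq] at hp; subst hp; decide

end ModuliPaper

namespace ModuliPaper

/-- The subvariety `mod(D₅,h)` of `mod(A,h)`: representations of the subquiver
of `Q5` obtained by deleting the arrow `β` (arrow index `1`). -/
def D5Var (K : Type) [Field K] (h : Fin 5 → ℕ) : Set (Rep K Q5 h) :=
  {M | M.mat 1 = 0}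

/-- The subvariety `mod(D̃₄,h)` of `mod(A,h)`: representations of the subquiver
of `Q5` obtained by deleting the arrow `α` (arrow index `0`). -/
def D4tVar (K : Type) [Field K] (h : Fin 5 → ℕ) : Set (Rep K Q5 h) :=
  {M | M.mat 0 = 0}


end ModuliPaper

/-!
A θ-stable module `M` is tested at the vertex `2` (index `1`) by two subrepresentations:
`ker M(α)` at vertex `2` and zero elsewhere, and `im M(β)` at vertex `2` and everything
elsewhere. If `θ(2) > 0` the first forces `M(α)` to be injective, with a left inverse `B`; if
`θ(2) < 0` the second forces `M(β)` to be surjective, with a right inverse `B`. Then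
`det (B N(α)) ≠ 0` (resp. `det (N(β) B) ≠ 0`) is an open condition on `N`, satisfied at `M`,
under which `αβ = 0` forces `N(β) = 0` (resp. `N(α) = 0`). So a θ-stable irreducible component
has a nonempty open part inside the irreducible closed set `mod(D₅,h) = {β = 0}`
(resp. `mod(D̃₄,h) = {α = 0}`), hence equals it by maximality. The same two test modules show
that `θ(2) > 0` when `β = 0` and `θ(2) < 0` when `α = 0`, so both stable loci cannot be
nonempty.
-/

open MvPolynomial
open scoped Matrix

lemma MvPolynomial.exists_eval_eq_det_mul_map_eval_mul {R σ : Type*} [CommRing R]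
    {l m n : Type*} [Fintype l] [Fintype m] [Fintype n] [DecidableEq n]
    (A : Matrix n l R) (G : Matrix l m (MvPolynomial σ R)) (B : Matrix m n R) :
    ∃ p : MvPolynomial σ R, ∀ x, eval x p = (A * G.map (eval x) * B).det := by
  refine ⟨(A.map (C (σ := σ)) * G * B.map (C (σ := σ))).det, fun x => ?_⟩
  rw [RingHom.map_det, RingHom.mapMatrix_apply, Matrix.map_mul, Matrix.map_mul, Matrix.map_map,
    Matrix.map_map]
  simp [Function.comp_def]

lemma Matrix.exists_mul_eq_one_of_injective_mulVec {K m n : Type*} [Field K] [Fintype m]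
    [Fintype n] [DecidableEq m] [DecidableEq n] {A : Matrix m n K}
    (hA : Function.Injective A.mulVec) : ∃ B : Matrix n m K, B * A = 1 := by
  obtain ⟨g, hg⟩ := A.mulVecLin.exists_leftInverse_of_injective (LinearMap.ker_eq_bot.2 hA)
  refine ⟨LinearMap.toMatrix' g, Matrix.toLin'.injective ?_⟩
  rw [Matrix.toLin'_mul, Matrix.toLin'_toMatrix', Matrix.toLin'_one, Matrix.toLin'_apply', hg]

lemma Matrix.eq_zero_of_isUnit_det_mul_of_mul_eq_zero {R l m n : Type*} [CommRing R] [Fintype m]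
    [Fintype n] [DecidableEq n] {B : Matrix n m R} {A : Matrix m n R} {X : Matrix n l R}
    (hBA : IsUnit (B * A).det) (hAX : A * X = 0) : X = 0 :=
  calc X = (B * A)⁻¹ * (B * A * X) := (Matrix.nonsing_inv_mul_cancel_left (B * A) X hBA).symm
    _ = 0 := by rw [Matrix.mul_assoc, hAX, Matrix.mul_zero, Matrix.mul_zero]

lemma Matrix.eq_zero_of_isUnit_det_mul_of_eq_zero_mul {R l m n : Type*} [CommRing R] [Fintype m]
    [Fintype n] [DecidableEq m] {A : Matrix m n R} {C : Matrix n m R} {Y : Matrix l m R}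
    (hAC : IsUnit (A * C).det) (hYA : Y * A = 0) : Y = 0 :=
  calc Y = Y * (A * C) * (A * C)⁻¹ := (Matrix.mul_nonsing_inv_cancel_right (A * C) Y hAC).symm
    _ = 0 := by rw [← Matrix.mul_assoc, hYA, Matrix.zero_mul, Matrix.zero_mul]

namespace ModuliPaper

variable {K : Type} [Field K]

section Zariski

variable {ι κ : Type}

lemma AffSp.isOpen_setOf_eval_ne_zero (p : MvPolynomial ι K) :
    IsOpen {x : AffSp K ι | eval x p ≠ 0} :=
  TopologicalSpace.isOpen_generateFrom_of_mem ⟨p, rfl⟩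

lemma AffSp.isTopologicalBasis :
    TopologicalSpace.IsTopologicalBasis
      {U : Set (AffSp K ι) | ∃ p : MvPolynomial ι K, U = {x | eval x p ≠ 0}} := by
  refine ⟨?_, ?_, rfl⟩
  · rintro _ ⟨p, rfl⟩ _ ⟨q, rfl⟩ x hx
    refine ⟨_, ⟨p * q, rfl⟩, ?_, fun y hy => ?_⟩
    · exact (map_mul (eval x) p q).trans_ne (mul_ne_zero hx.1 hx.2)
    · exact mul_ne_zero_iff.mp ((map_mul (eval y) p q).symm.trans_ne hy)
  · exact Set.eq_univ_of_forall fun x =>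
      ⟨_, ⟨1, rfl⟩, (map_one (eval x)).trans_ne one_ne_zero⟩

lemma AffSp.isIrreducible_univ [Infinite K] : IsIrreducible (Set.univ : Set (AffSp K ι)) := by
  refine ⟨⟨fun _ => 0, trivial⟩, fun u v hu hv ⟨x, _, hx⟩ ⟨y, _, hy⟩ => ?_⟩
  obtain ⟨_, ⟨p, rfl⟩, hxp, hpu⟩ := isTopologicalBasis.exists_subset_of_mem_open hx hu
  obtain ⟨_, ⟨q, rfl⟩, hyq, hqv⟩ := isTopologicalBasis.exists_subset_of_mem_open hy hv
  have hpq : p * q ≠ 0 := by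
    refine mul_ne_zero (fun hp => hxp ?_) (fun hq => hyq ?_) <;> simp [*]
  obtain ⟨z, hz⟩ : ∃ z, eval z (p * q) ≠ 0 := by
    by_contra! hall
    exact hpq (MvPolynomial.funext fun z => by simpa using hall z)
  rw [map_mul, mul_ne_zero_iff] at hz
  exact ⟨z, trivial, hpu hz.1, hqv hz.2⟩

lemma AffSp.continuous_of_eval {f : AffSp K ι → AffSp K κ} (F : κ → MvPolynomial ι K)
    (hf : ∀ x c, f x c = eval x (F c)) : Continuous f := by
  refine continuous_generateFrom_iff.mpr ?_
  rintro _ ⟨p, rfl⟩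
  have key : ∀ x, eval (f x) p = eval x (eval₂ C F p) := fun x =>
    (congrArg (eval · p) (funext (hf x))).trans (eval_assoc F x p)
  convert isOpen_setOf_eval_ne_zero (eval₂ C F p) using 1
  ext x
  exact not_congr (Eq.congr_left (key x))

end Zariski

section RepTopology

variable {Q : Quiv} {d : Q.V → ℕ}

def CoordIdx.mk (a : Q.Ar) (i : Fin (d (Q.t a))) (j : Fin (d (Q.s a))) : CoordIdx Q d :=
  ⟨a, (i, j)⟩

/-- `Rep.coords` with values in `K` rather than in the type synonym `AffSp`, so that
rewriting under `MvPolynomial.eval` typechecks. -/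
def Rep.coordFn (M : Rep K Q d) : CoordIdx Q d → K := M.coords K

omit [Field K] in
@[simp]
lemma Rep.coordFn_mk (M : Rep K Q d) (a : Q.Ar) (i : Fin (d (Q.t a))) (j : Fin (d (Q.s a))) :
    M.coordFn (CoordIdx.mk a i j) = M.mat a i j :=
  rfl

lemma Rep.isOpen_setOf_eval_ne_zero (p : MvPolynomial (CoordIdx Q d) K) :
    IsOpen {M : Rep K Q d | eval M.coordFn p ≠ 0} :=
  (AffSp.isOpen_setOf_eval_ne_zero p).preimage continuous_induced_dom

lemma Rep.isClosed_setOf_mat_eq_zero (a : Q.Ar) : IsClosed {M : Rep K Q d | M.mat a = 0} := by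
  have : {M : Rep K Q d | M.mat a = 0} =
      ⋂ (i) (j), {M | eval M.coordFn (X (CoordIdx.mk a i j)) ≠ 0}ᶜ := by
    ext M
    simp only [Set.mem_iInter, Set.mem_compl_iff, Set.mem_ofPred_eq, not_not, eval_X,
      Rep.coordFn_mk]
    exact ⟨fun h i j => congrFun (congrFun h i) j, fun h => Matrix.ext h⟩
  rw [this]
  exact isClosed_iInter fun i => isClosed_iInter fun j =>
    (isOpen_setOf_eval_ne_zero _).isClosed_compl

lemma Rep.isIrreducible_setOf_mat_eq_zero [Infinite K] (a : Q.Ar) :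
    IsIrreducible {M : Rep K Q d | M.mat a = 0} := by
  classical
  let g : AffSp K (CoordIdx Q d) → Rep K Q d := fun x =>
    ⟨fun b => if b = a then 0 else Matrix.of fun i j => x ⟨b, (i, j)⟩⟩
  have hg : Continuous g := continuous_induced_rng.2 <|
    AffSp.continuous_of_eval (fun c => if c.1 = a then 0 else X c) fun x c => by
      obtain ⟨b, i, j⟩ := c
      show (if b = a then 0 else Matrix.of fun i j => x ⟨b, (i, j)⟩) i j =
        eval x (if b = a then 0 else X ⟨b, (i, j)⟩)
      split_ifs
      · simp
      · exact (eval_X (f := x) _).symm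
  have himage : g '' Set.univ = {M | M.mat a = 0} := by
    ext M
    refine ⟨?_, fun hM => ⟨M.coords K, trivial, ?_⟩⟩
    · rintro ⟨x, -, rfl⟩
      simp [g]
    · cases M with | mk mat => ?_
      show Rep.mk _ = Rep.mk _
      congr 1
      funext b
      by_cases hb : b = a
      · subst hb; simpa using hM.symm
      · simp only [hb, if_false]; rfl
  exact himage ▸ AffSp.isIrreducible_univ.image g hg.continuousOn

noncomputable def genericMat (a : Q.Ar) :
    Matrix (Fin (d (Q.t a))) (Fin (d (Q.s a))) (MvPolynomial (CoordIdx Q d) K) :=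
  Matrix.of fun i j => X (CoordIdx.mk a i j)

lemma Rep.map_genericMat (M : Rep K Q d) (a : Q.Ar) :
    (genericMat a).map (eval M.coordFn) = M.mat a :=
  Matrix.ext fun _ _ => eval_X _

lemma Rep.isOpen_setOf_isUnit_det {n : ℕ} (a : Q.Ar) (L : Matrix (Fin n) (Fin (d (Q.t a))) K)
    (R : Matrix (Fin (d (Q.s a))) (Fin n) K) :
    IsOpen {M : Rep K Q d | IsUnit (L * M.mat a * R).det} := by
  obtain ⟨p, hp⟩ := MvPolynomial.exists_eval_eq_det_mul_map_eval_mul L (genericMat (K := K) a) R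
  convert isOpen_setOf_eval_ne_zero p using 1
  ext M
  rw [Set.mem_ofPred_eq, Set.mem_ofPred_eq, hp, Rep.map_genericMat, isUnit_iff_ne_zero]

end RepTopology

lemma IsIrrComp.eq_of_inter_isOpen_subset {Q : Quiv} {d : Q.V → ℕ} {Z C Y U : Set (Rep K Q d)}
    (hC : IsIrrComp K Z C) (hYZ : Y ⊆ Z) (hY : IsClosed Y) (hYirr : IsIrreducible Y)
    (hU : IsOpen U) (hCU : (C ∩ U).Nonempty) (hCUY : C ∩ U ⊆ Y) : C = Y :=
  hC.2.2.2 Y hYZ hY hYirr <|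
    (subset_closure_inter_of_isPreirreducible_of_isOpen hC.2.2.1.2 hU hCU).trans
      (closure_minimal hCUY hY)

section Stability

variable {Q : Quiv} {d : Q.V → ℕ} {θ : Q.V → ℤ} {M : Rep K Q d}

lemma wt_single (θ : Q.V → ℤ) (x : Q.V) (n : ℕ) : wt θ (Pi.single x n) = θ x * n := by
  simp [wt, Pi.single_apply]

lemma wt_update (θ : Q.V → ℤ) (d : Q.V → ℕ) (x : Q.V) (n : ℕ) :
    wt θ (Function.update d x n) = wt θ d + θ x * (n - d x) := by
  simp only [wt]
  rw [← Finset.add_sum_erase _ _ (Finset.mem_univ x),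
    ← Finset.add_sum_erase _ _ (Finset.mem_univ x),
    Finset.sum_congr rfl fun y hy => by rw [Function.update_of_ne (Finset.ne_of_mem_erase hy)],
    Function.update_self]
  ring

lemma finrank_update_bot (x : Q.V) (U : Submodule K (Fin (d x) → K)) :
    (fun y => Module.finrank K (Function.update (β := fun y => Submodule K (Fin (d y) → K))
      ⊥ x U y)) = Pi.single x (Module.finrank K U) := by
  funext y
  rcases eq_or_ne y x with rfl | hy
  · rw [Function.update_self, Pi.single_eq_same]
  · rw [Function.update_of_ne hy, Pi.single_eq_of_ne hy]
    exact finrank_bot K _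

lemma finrank_update_top (x : Q.V) (U : Submodule K (Fin (d x) → K)) :
    (fun y => Module.finrank K (Function.update (β := fun y => Submodule K (Fin (d y) → K))
      ⊤ x U y)) = Function.update d x (Module.finrank K U) := by
  funext y
  rcases eq_or_ne y x with rfl | hy
  · rw [Function.update_self, Function.update_self]
  · rw [Function.update_of_ne hy, Function.update_of_ne hy]
    exact (finrank_top K _).trans (Module.finrank_fin_fun K)

lemma IsStable.neg_of_dimVec_eq_single (hM : IsStable K θ M) (W : SubRep K M) {x : Q.V} {n : ℕ}
    (hW : W.dimVec K = Pi.single x n) (hn : n ≠ 0) (hθ : θ x ≠ 0) : θ x < 0 := by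
  have hlt : θ x * n < 0 := by
    rw [← wt_single, ← hW]
    refine hM.2.2 W (by simpa [hW] using hn) fun hWd => hθ ?_
    have := hM.2.1
    rw [← hWd, hW, wt_single] at this
    simpa [hn] using this
  by_contra! h
  nlinarith

lemma IsStable.pos_of_dimVec_eq_update (hM : IsStable K θ M) (W : SubRep K M) {x : Q.V} {n : ℕ}
    (hW : W.dimVec K = Function.update d x n) (hn : n < d x) (hθ : θ x ≠ 0) : 0 < θ x := by
  have hwt : wt θ (W.dimVec K) = θ x * (n - d x) := by rw [hW, wt_update, hM.2.1, zero_add]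
  have hlt : θ x * (n - d x) < 0 := by
    rw [← hwt]
    refine hM.2.2 W (fun hW0 => hθ ?_) fun hWd => ?_
    · rw [hW0] at hwt
      have : (n : ℤ) - d x ≠ 0 := by omega
      simpa [wt, this] using hwt.symm
    · have := congrFun (hW.symm.trans hWd) x
      rw [Function.update_self] at this
      omega
  by_contra! h
  nlinarith

end Stability

section Q5

variable {h : Fin 5 → ℕ} {θ : Fin 5 → ℤ} {M : Rep K Q5 h}

/-- `M(α)`, and `M(β)` below, with the vertices `Q5.t 0`, `Q5.s 0`, … in their types reduced
to numerals, so that products such as `matα M * matβ M` elaborate. -/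
def matα (M : Rep K Q5 h) : Matrix (Fin (h 0)) (Fin (h 1)) K := M.mat 0

def matβ (M : Rep K Q5 h) : Matrix (Fin (h 1)) (Fin (h 2)) K := M.mat 1

lemma mem_pairModVar_R5_iff : M ∈ pairModVar K R5 h ↔ matα M * matβ M = 0 := by
  refine ⟨fun hM => Matrix.ext fun i j => hM 1 0 rfl i j, fun hM a b hab i j => ?_⟩
  obtain ⟨rfl, rfl⟩ := Prod.mk.inj hab
  exact congrFun (congrFun hM i) j

lemma D5Var_subset_pairModVar : D5Var K h ⊆ pairModVar K R5 h := fun M hM => by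
  have hβ : matβ M = 0 := hM
  rw [mem_pairModVar_R5_iff, hβ, Matrix.mul_zero]

lemma D4tVar_subset_pairModVar : D4tVar K h ⊆ pairModVar K R5 h := fun M hM => by
  have hα : matα M = 0 := hM
  rw [mem_pairModVar_R5_iff, hα, Matrix.zero_mul]

def SubRep.atOne (M : Rep K Q5 h) (U : Submodule K (Fin (h 1) → K))
    (hU : ∀ v ∈ U, matα M *ᵥ v = 0) : SubRep K M where
  space := Function.update ⊥ 1 U
  stable a v hv := by
    by_cases hs : Q5.s a = 1
    · obtain rfl : a = 0 := by fin_cases a <;> first | rfl | exact absurd hs (by decide)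
      change v ∈ Function.update (β := fun x => Submodule K (Fin (h x) → K)) ⊥ 1 U 1 at hv
      rw [Function.update_self] at hv
      change matα M *ᵥ v ∈
        Function.update (β := fun x => Submodule K (Fin (h x) → K)) ⊥ 1 U 0
      rw [Function.update_of_ne (by decide)]
      exact (Submodule.mem_bot K).2 (hU v hv)
    · rw [Function.update_of_ne hs, Pi.bot_apply, Submodule.mem_bot] at hv
      rw [hv, Matrix.mulVec_zero]
      exact Submodule.zero_mem _

def SubRep.awayFromOne (M : Rep K Q5 h) (U : Submodule K (Fin (h 1) → K))
    (hU : ∀ v, matβ M *ᵥ v ∈ U) : SubRep K M where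
  space := Function.update ⊤ 1 U
  stable a v _ := by
    by_cases ht : Q5.t a = 1
    · obtain rfl : a = 1 := by fin_cases a <;> first | rfl | exact absurd ht (by decide)
      change matβ M *ᵥ v ∈
        Function.update (β := fun x => Submodule K (Fin (h x) → K)) ⊤ 1 U 1
      rw [Function.update_self]
      exact hU v
    · rw [Function.update_of_ne ht]
      exact Submodule.mem_top

lemma isOpen_setOf_isUnit_det_mul_matα (B : Matrix (Fin (h 1)) (Fin (h 0)) K) :
    IsOpen {M : Rep K Q5 h | IsUnit (B * matα M).det} := by
  convert Rep.isOpen_setOf_isUnit_det (Q := Q5) (d := h) 0 B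
    (1 : Matrix (Fin (h 1)) (Fin (h 1)) K) using 1
  ext M
  change IsUnit (B * matα M).det ↔ IsUnit (B * matα M * 1).det
  rw [Matrix.mul_one]

lemma isOpen_setOf_isUnit_det_matβ_mul (B : Matrix (Fin (h 2)) (Fin (h 1)) K) :
    IsOpen {M : Rep K Q5 h | IsUnit (matβ M * B).det} := by
  convert Rep.isOpen_setOf_isUnit_det (Q := Q5) (d := h) 1
    (1 : Matrix (Fin (h 1)) (Fin (h 1)) K) B using 1
  ext M
  change IsUnit (matβ M * B).det ↔
    IsUnit ((1 : Matrix (Fin (h 1)) (Fin (h 1)) K) * matβ M * B).det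
  rw [Matrix.one_mul]

lemma SubRep.dimVec_atOne (M : Rep K Q5 h) (U : Submodule K (Fin (h 1) → K))
    (hU : ∀ v ∈ U, matα M *ᵥ v = 0) :
    (SubRep.atOne M U hU).dimVec K = Pi.single 1 (Module.finrank K U) :=
  finrank_update_bot (Q := Q5) 1 U

lemma SubRep.dimVec_awayFromOne (M : Rep K Q5 h) (U : Submodule K (Fin (h 1) → K))
    (hU : ∀ v, matβ M *ᵥ v ∈ U) :
    (SubRep.awayFromOne M U hU).dimVec K = Function.update h 1 (Module.finrank K U) :=
  finrank_update_top (Q := Q5) 1 U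

lemma IsStable.neg_of_atOne (hM : IsStable K θ M) {U : Submodule K (Fin (h 1) → K)}
    (hU : ∀ v ∈ U, matα M *ᵥ v = 0) (hU0 : U ≠ ⊥) (hθ : θ 1 ≠ 0) : θ 1 < 0 :=
  hM.neg_of_dimVec_eq_single (SubRep.atOne M U hU) (SubRep.dimVec_atOne M U hU)
    (Submodule.finrank_eq_zero.not.2 hU0) hθ

lemma IsStable.pos_of_awayFromOne (hM : IsStable K θ M) {U : Submodule K (Fin (h 1) → K)}
    (hU : ∀ v, matβ M *ᵥ v ∈ U) (hU1 : U ≠ ⊤) (hθ : θ 1 ≠ 0) : 0 < θ 1 :=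
  hM.pos_of_dimVec_eq_update (SubRep.awayFromOne M U hU) (SubRep.dimVec_awayFromOne M U hU)
    (by simpa using Submodule.finrank_lt hU1) hθ

lemma IsStable.pos_of_mem_D5Var (hM : IsStable K θ M) (hD : M ∈ D5Var K h) (h1 : 1 ≤ h 1)
    (hθ : θ 1 ≠ 0) : 0 < θ 1 := by
  have hβ : matβ M = 0 := hD
  have : Nonempty (Fin (h 1)) := ⟨⟨0, h1⟩⟩
  exact hM.pos_of_awayFromOne (U := ⊥) (fun v => by simp [hβ]) bot_ne_top hθ

lemma IsStable.neg_of_mem_D4tVar (hM : IsStable K θ M) (hD : M ∈ D4tVar K h) (h1 : 1 ≤ h 1)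
    (hθ : θ 1 ≠ 0) : θ 1 < 0 := by
  have hα : matα M = 0 := hD
  have : Nonempty (Fin (h 1)) := ⟨⟨0, h1⟩⟩
  exact hM.neg_of_atOne (U := ⊤) (fun v _ => by simp [hα]) top_ne_bot hθ

lemma IsStable.injective_mulVec_matα (hM : IsStable K θ M) (hθ : 0 < θ 1) :
    Function.Injective (matα M).mulVec := by
  refine (LinearMap.ker_eq_bot (f := (matα M).mulVecLin)).1 (not_not.1 fun hker => ?_)
  exact (hM.neg_of_atOne (fun _ hv => hv) hker hθ.ne').asymm hθ

lemma IsStable.surjective_mulVec_matβ (hM : IsStable K θ M) (hθ : θ 1 < 0) :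
    Function.Surjective (matβ M).mulVec := by
  refine (LinearMap.range_eq_top (f := (matβ M).mulVecLin)).1 (not_not.1 fun hrange => ?_)
  exact (hM.pos_of_awayFromOne (LinearMap.mem_range_self _) hrange hθ.ne).asymm hθ

lemma IsIrrComp.eq_D5Var_of_isStable [Infinite K] {C : Set (Rep K Q5 h)}
    (hC : IsIrrComp K (pairModVar K R5 h) C) (hst : ∃ M ∈ C, IsStable K θ M) (hθ : 0 < θ 1) :
    C = D5Var K h := by
  obtain ⟨M, hMC, hM⟩ := hst
  obtain ⟨B, hB⟩ := Matrix.exists_mul_eq_one_of_injective_mulVec (hM.injective_mulVec_matα hθ)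
  refine hC.eq_of_inter_isOpen_subset D5Var_subset_pairModVar (Rep.isClosed_setOf_mat_eq_zero 1)
    (Rep.isIrreducible_setOf_mat_eq_zero 1) (isOpen_setOf_isUnit_det_mul_matα B)
    ⟨M, hMC, by simp [hB]⟩ fun N ⟨hNC, hN⟩ => ?_
  exact Matrix.eq_zero_of_isUnit_det_mul_of_mul_eq_zero hN (mem_pairModVar_R5_iff.1 (hC.1 hNC))

lemma IsIrrComp.eq_D4tVar_of_isStable [Infinite K] {C : Set (Rep K Q5 h)}
    (hC : IsIrrComp K (pairModVar K R5 h) C) (hst : ∃ M ∈ C, IsStable K θ M) (hθ : θ 1 < 0) :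
    C = D4tVar K h := by
  obtain ⟨M, hMC, hM⟩ := hst
  obtain ⟨B, hB⟩ :=
    Matrix.mulVec_surjective_iff_exists_right_inverse.1 (hM.surjective_mulVec_matβ hθ)
  refine hC.eq_of_inter_isOpen_subset D4tVar_subset_pairModVar (Rep.isClosed_setOf_mat_eq_zero 0)
    (Rep.isIrreducible_setOf_mat_eq_zero 0) (isOpen_setOf_isUnit_det_matβ_mul B)
    ⟨M, hMC, by simp [hB]⟩ fun N ⟨hNC, hN⟩ => ?_
  exact Matrix.eq_zero_of_isUnit_det_mul_of_eq_zero_mul hN (mem_pairModVar_R5_iff.1 (hC.1 hNC))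

end Q5

theorem separation_of_stable_components_for_Q5_general
    (K : Type) [Field K] [IsAlgClosed K]
    (θ : Fin 5 → ℤ) (hθ : θ 1 ≠ 0) :
    (∀ h : Fin 5 → ℕ, (∃ M ∈ pairModVar K R5 h, IsSemiStable K θ M) →
      ∀ C₁ C₂ : Set (Rep K Q5 h),
        IsIrrComp K (pairModVar K R5 h) C₁ → (∃ M ∈ C₁, IsStable K θ M) →
        IsIrrComp K (pairModVar K R5 h) C₂ → (∃ M ∈ C₂, IsStable K θ M) →
        C₁ = C₂) ∧
    (∀ h₁ h₂ : Fin 5 → ℕ,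
      (∃ M ∈ pairModVar K R5 h₁, IsStable K θ M) →
      (∃ M ∈ pairModVar K R5 h₂, IsStable K θ M) →
      1 ≤ h₁ 1 → 1 ≤ h₂ 1 →
      ¬ ((∃ M ∈ D5Var K h₁, IsStable K θ M) ∧ (∃ N ∈ D4tVar K h₂, IsStable K θ N))) := by
  refine ⟨fun h _ C₁ C₂ hC₁ hst₁ hC₂ hst₂ => ?_,
    fun h₁ h₂ _ _ h₁1 h₂1 ⟨⟨M, hMD, hM⟩, ⟨N, hND, hN⟩⟩ => ?_⟩
  · rcases hθ.lt_or_gt with hneg | hpos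
    · rw [hC₁.eq_D4tVar_of_isStable hst₁ hneg, hC₂.eq_D4tVar_of_isStable hst₂ hneg]
    · rw [hC₁.eq_D5Var_of_isStable hst₁ hpos, hC₂.eq_D5Var_of_isStable hst₂ hpos]
  · exact (hM.pos_of_mem_D5Var hMD h₁1 hθ).asymm (hN.neg_of_mem_D4tVar hND h₂1 hθ)

/-- For the algebra `A = KQ5/⟨αβ⟩` and a weight `θ` with
`θ(2) ≠ 0` (vertex `2` is index `1`): (a) for every θ-semi-stable dimension
vector `h`, the module variety `mod(A,h)` has at most one θ-stable irreducible
component; (b) for θ-stable dimension vectors `h₁, h₂` with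
`h₁(2), h₂(2) ≥ 1`, the θ-stable loci `mod(D₅,h₁)^s_θ` and `mod(D̃₄,h₂)^s_θ`
cannot both be non-empty. -/
theorem separation_of_stable_components_for_Q5
    (K : Type) [Field K] [IsAlgClosed K] [CharZero K]
    (θ : Fin 5 → ℤ) (hθ : θ 1 ≠ 0) :
    (∀ h : Fin 5 → ℕ, (∃ M ∈ pairModVar K R5 h, IsSemiStable K θ M) →
      ∀ C₁ C₂ : Set (Rep K Q5 h),
        IsIrrComp K (pairModVar K R5 h) C₁ → (∃ M ∈ C₁, IsStable K θ M) →
        IsIrrComp K (pairModVar K R5 h) C₂ → (∃ M ∈ C₂, IsStable K θ M) →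
        C₁ = C₂) ∧
    (∀ h₁ h₂ : Fin 5 → ℕ,
      (∃ M ∈ pairModVar K R5 h₁, IsStable K θ M) →
      (∃ M ∈ pairModVar K R5 h₂, IsStable K θ M) →
      1 ≤ h₁ 1 → 1 ≤ h₂ 1 →
      ¬ ((∃ M ∈ D5Var K h₁, IsStable K θ M) ∧ (∃ N ∈ D4tVar K h₂, IsStable K θ N))) :=
  separation_of_stable_components_for_Q5_general K θ hθ

end ModuliPaper
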